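/- arXiv:1902.02163 — 4 statements merged into one kernel-verified Lean document; each statement's English description precedes it below -/
import Mathlib

section
/- Let E be a Euclidean space, let p : ι → E be a family of points, let T be a nonempty finite subset of ι such that dist(p i, p j) ≤ Λ for all i, j ∈ T, and let S be a nonempty subset of T. Then dist(centroid of p over S, centroid of p over T) ≤ ((|T| − 1)/|T|) · Λ. In particular, if |T| ≤ n + 1 then this distance is at most (n/(n+1)) · Λ. -/
/-!
Write `c_S` and `c_T` for the two centroids. Summing `c_S - p j` over `j ∈ T` gives
`|T| • (c_S - c_T)`, and the terms with `j ∈ S` sum to zero, so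
`|T| • (c_S - c_T) = ∑ j ∈ T \ S, (c_S - p j)`. The centroid `c_S` lies in the convex hull of
`p '' S`, hence in every closed ball of radius `Λ` around a point `p j`, `j ∈ T`. So each of the at
most `|T| - 1` terms has norm at most `Λ`. The bound `(|T| - 1)/|T| = 1 - 1/|T|` increases with
`|T|`, which gives the second estimate.
-/

namespace Finset

section Module

variable {k V ι : Type*} [Field k] [CharZero k] [AddCommGroup V] [Module k V]

theorem centroid_eq_inv_card_smul_sum {s : Finset ι} (hs : s.Nonempty) (p : ι → V) :
    s.centroid k p = (#s : k)⁻¹ • ∑ i ∈ s, p i := by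
  rw [centroid_def,
    s.affineCombination_eq_linear_combination p _ (s.sum_centroidWeights_eq_one_of_nonempty k hs)]
  simp only [centroidWeights_apply, smul_sum]

theorem card_smul_sub_centroid_eq_sum_sub {s : Finset ι} (hs : s.Nonempty) (p : ι → V) (x : V) :
    (#s : k) • (x - s.centroid k p) = ∑ i ∈ s, (x - p i) := by
  have hcard : (#s : k) ≠ 0 := Nat.cast_ne_zero.2 hs.card_pos.ne'
  rw [centroid_eq_inv_card_smul_sum hs, smul_sub, smul_inv_smul₀ hcard, sum_sub_distrib,
    sum_const, Nat.cast_smul_eq_nsmul]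

theorem card_smul_centroid_sub_centroid_of_subset [DecidableEq ι] {s t : Finset ι}
    (hs : s.Nonempty) (hst : s ⊆ t) (p : ι → V) :
    (#t : k) • (s.centroid k p - t.centroid k p) = ∑ j ∈ t \ s, (s.centroid k p - p j) := by
  rw [card_smul_sub_centroid_eq_sum_sub (hs.mono hst), ← sum_sdiff hst,
    ← card_smul_sub_centroid_eq_sum_sub (k := k) hs, sub_self, smul_zero, add_zero]

end Module

section Normed

variable {E ι : Type*} [NormedAddCommGroup E] [NormedSpace ℝ E]

theorem dist_centroid_le_of_forall_dist_le {s : Finset ι} (hs : s.Nonempty) {p : ι → E} {x : E}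
    {r : ℝ} (h : ∀ i ∈ s, dist (p i) x ≤ r) : dist (s.centroid ℝ p) x ≤ r := by
  rw [← Metric.mem_closedBall, s.centroid_eq_centerMass hs]
  refine (convex_closedBall x r).centerMass_mem (fun _ _ => by simp) ?_ h
  simp [centroidWeights_apply, hs.card_pos]

theorem dist_centroid_centroid_le_of_subset {s t : Finset ι} (hs : s.Nonempty) (hst : s ⊆ t)
    {p : ι → E} {Λ : ℝ} (hΛ : ∀ i ∈ t, ∀ j ∈ t, dist (p i) (p j) ≤ Λ) :
    dist (s.centroid ℝ p) (t.centroid ℝ p) ≤ ((#t : ℝ) - 1) / #t * Λ := by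
  classical
  obtain ⟨i₀, hi₀⟩ := hs
  have hΛ_nonneg : 0 ≤ Λ := dist_nonneg.trans (hΛ i₀ (hst hi₀) i₀ (hst hi₀))
  have ht : (0 : ℝ) < #t := by exact_mod_cast (card_pos.2 ⟨i₀, hst hi₀⟩)
  have hcard : (#(t \ s) : ℝ) ≤ #t - 1 := by
    have hsum : (#(t \ s) : ℝ) + #s = #t := by exact_mod_cast card_sdiff_add_card_eq_card hst
    have hs_card : (1 : ℝ) ≤ #s := by exact_mod_cast card_pos.2 ⟨i₀, hi₀⟩
    linarith
  have hterm : ∀ j ∈ t \ s, ‖s.centroid ℝ p - p j‖ ≤ Λ := fun j hj => by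
    rw [← dist_eq_norm]
    exact dist_centroid_le_of_forall_dist_le ⟨i₀, hi₀⟩ fun i hi =>
      hΛ i (hst hi) j (mem_sdiff.1 hj).1
  rw [div_mul_eq_mul_div, le_div_iff₀ ht, mul_comm, dist_eq_norm]
  calc (#t : ℝ) * ‖s.centroid ℝ p - t.centroid ℝ p‖
      = ‖(#t : ℝ) • (s.centroid ℝ p - t.centroid ℝ p)‖ := by rw [norm_smul, Real.norm_natCast]
    _ = ‖∑ j ∈ t \ s, (s.centroid ℝ p - p j)‖ := by
      rw [card_smul_centroid_sub_centroid_of_subset ⟨i₀, hi₀⟩ hst]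
    _ ≤ ∑ _j ∈ t \ s, Λ := norm_sum_le_of_le _ hterm
    _ = #(t \ s) * Λ := by rw [sum_const, nsmul_eq_mul]
    _ ≤ (#t - 1) * Λ := mul_le_mul_of_nonneg_right hcard hΛ_nonneg

end Normed

end Finset

theorem sub_one_div_self_le_sub_one_div_self {a b : ℝ} (ha : 0 < a) (hab : a ≤ b) :
    (a - 1) / a ≤ (b - 1) / b := by
  rw [sub_div, sub_div, div_self ha.ne', div_self (ha.trans_le hab).ne']
  exact sub_le_sub_left (one_div_le_one_div_of_le ha hab) 1

theorem dist_centroid_subset_le_general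
    {E : Type*} [NormedAddCommGroup E] [InnerProductSpace ℝ E] {ι : Type*}
    (p : ι → E) (T : Finset ι) (Λ : ℝ)
    (hΛ : ∀ i ∈ T, ∀ j ∈ T, dist (p i) (p j) ≤ Λ)
    (S : Finset ι) (hS : S.Nonempty) (hST : S ⊆ T) :
    dist (S.centroid ℝ p) (T.centroid ℝ p) ≤ ((T.card : ℝ) - 1) / (T.card : ℝ) * Λ ∧
    ∀ n : ℕ, T.card ≤ n + 1 →
      dist (S.centroid ℝ p) (T.centroid ℝ p) ≤ (n : ℝ) / ((n : ℝ) + 1) * Λ := by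
  have hmain := Finset.dist_centroid_centroid_le_of_subset hS hST hΛ
  refine ⟨hmain, fun n hn => hmain.trans (mul_le_mul_of_nonneg_right ?_ ?_)⟩
  · have hT : (0 : ℝ) < T.card := by exact_mod_cast (hS.mono hST).card_pos
    have := sub_one_div_self_le_sub_one_div_self hT (b := n + 1) (by exact_mod_cast hn)
    rwa [add_sub_cancel_right] at this
  · obtain ⟨i, hi⟩ := hS
    exact dist_nonneg.trans (hΛ i (hST hi) i (hST hi))

/-- If all pairwise distances among the points `p i`, `i ∈ T`, are at most `Λ`,
then for any nonempty `S ⊆ T` the distance between the centroids of `p` over `S`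
and over `T` is at most `((|T| - 1)/|T|) * Λ`; in particular it is at most
`(n/(n+1)) * Λ` whenever `|T| ≤ n + 1`. -/
theorem dist_centroid_subset_le
    {E : Type*} [NormedAddCommGroup E] [InnerProductSpace ℝ E] {ι : Type*}
    (p : ι → E) (T : Finset ι) (hT : T.Nonempty) (Λ : ℝ)
    (hΛ : ∀ i ∈ T, ∀ j ∈ T, dist (p i) (p j) ≤ Λ)
    (S : Finset ι) (hS : S.Nonempty) (hST : S ⊆ T) :
    dist (S.centroid ℝ p) (T.centroid ℝ p) ≤ ((T.card : ℝ) - 1) / (T.card : ℝ) * Λ ∧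
    ∀ n : ℕ, T.card ≤ n + 1 →
      dist (S.centroid ℝ p) (T.centroid ℝ p) ≤ (n : ℝ) / ((n : ℝ) + 1) * Λ :=
  dist_centroid_subset_le_general p T Λ hΛ S hS hST
end

section
/- Let a, b, c be unit vectors in a real inner product space with ⟪a,b⟫ ≥ 0, ⟪a,c⟫ ≥ 0 and ⟪b,c⟫ ≥ 0 (i.e. the pairwise spherical distances are at most π/2). Let s, t ≥ 0 be real numbers with d = s•b + t•c ≠ 0. Then angle(a, d) ≤ max(angle(a, b), angle(a, c)). -/
open RealInnerProductSpace

lemma arccos_antitone : Antitone Real.arccos := fun x y h => by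
  unfold Real.arccos
  exact sub_le_sub_left (Real.monotone_arcsin h) _

/-- Spherical version of the triangle lemma: if `a`, `b`, `c` are unit vectors
with pairwise nonnegative inner products (pairwise spherical distances at most
`π/2`), then for any point `d = s • b + t • c` (with `s, t ≥ 0`, `d ≠ 0`) of the
arc from `b` to `c`, the angle from `a` to `d` is at most the maximum of the
angles from `a` to `b` and from `a` to `c`. -/
theorem angle_combination_le_max
    {E : Type*} [NormedAddCommGroup E] [InnerProductSpace ℝ E]
    (a b c : E) (ha : ‖a‖ = 1) (hb : ‖b‖ = 1) (hc : ‖c‖ = 1)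
    (hab : 0 ≤ ⟪a, b⟫) (hac : 0 ≤ ⟪a, c⟫) (hbc : 0 ≤ ⟪b, c⟫)
    (s t : ℝ) (hs : 0 ≤ s) (ht : 0 ≤ t) (hd : s • b + t • c ≠ 0) :
    InnerProductGeometry.angle a (s • b + t • c) ≤
      max (InnerProductGeometry.angle a b) (InnerProductGeometry.angle a c) := by
  have hdn : 0 < ‖s • b + t • c‖ := norm_pos_iff.mpr hd
  set m := min ⟪a, b⟫ ⟪a, c⟫ with hm
  have hm0 : 0 ≤ m := le_min hab hac
  have hnorm : ‖s • b + t • c‖ ≤ s + t := by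
    calc ‖s • b + t • c‖ ≤ ‖s • b‖ + ‖t • c‖ := norm_add_le _ _
    _ = s + t := by
      rw [norm_smul, norm_smul, hb, hc]
      simp [abs_of_nonneg hs, abs_of_nonneg ht]
  have hinner : (s + t) * m ≤ ⟪a, s • b + t • c⟫ := by
    rw [inner_add_right, real_inner_smul_right, real_inner_smul_right]
    nlinarith [min_le_left ⟪a, b⟫ ⟪a, c⟫, min_le_right ⟪a, b⟫ ⟪a, c⟫]
  have key : m ≤ ⟪a, s • b + t • c⟫ / (‖a‖ * ‖s • b + t • c‖) := by
    rw [ha, one_mul, le_div_iff₀ hdn]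
    calc m * ‖s • b + t • c‖ ≤ m * (s + t) := mul_le_mul_of_nonneg_left hnorm hm0
    _ ≤ ⟪a, s • b + t • c⟫ := by linarith [hinner]
  have had : InnerProductGeometry.angle a (s • b + t • c) ≤ Real.arccos m :=
    arccos_antitone key
  rcases le_total ⟪a, b⟫ ⟪a, c⟫ with h | h
  · refine had.trans (le_max_of_le_left ?_)
    rw [InnerProductGeometry.angle, ha, hb, hm, min_eq_left h]
    simp
  · refine had.trans (le_max_of_le_right ?_)
    rw [InnerProductGeometry.angle, ha, hc, hm, min_eq_right h]
    simp
end

section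
/- Let ι be a nonempty finite index set and let v : ι → E be unit vectors in a real inner product space such that ⟪v i, v j⟫ ≥ 0 for all i, j, and suppose angle(v i, v j) ≤ θ for all i, j, where 0 ≤ θ ≤ π/2. Let s, t : ι → ℝ be nonnegative coefficients such that x = Σ_i s i • v i ≠ 0 and y = Σ_i t i • v i ≠ 0. Then angle(x, y) ≤ θ. -/
open RealInnerProductSpace Real

/-- The diameter of a spherical simplex with edges of length at most `θ ≤ π/2`
is at most `θ`: if the unit vectors `v i` have pairwise nonnegative inner
products and pairwise angles at most `θ`, then any two nonzero nonnegative
combinations of the `v i` make an angle at most `θ`. -/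
theorem angle_nonneg_combinations_le
    {E ι : Type*} [NormedAddCommGroup E] [InnerProductSpace ℝ E]
    [Fintype ι] [Nonempty ι] (v : ι → E) (hv : ∀ i, ‖v i‖ = 1)
    (hpos : ∀ i j, 0 ≤ ⟪v i, v j⟫)
    (θ : ℝ) (hθ0 : 0 ≤ θ) (hθ : θ ≤ π / 2)
    (hang : ∀ i j, InnerProductGeometry.angle (v i) (v j) ≤ θ)
    (s t : ι → ℝ) (hs : ∀ i, 0 ≤ s i) (ht : ∀ i, 0 ≤ t i)
    (hx : ∑ i, s i • v i ≠ 0) (hy : ∑ i, t i • v i ≠ 0) :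
    InnerProductGeometry.angle (∑ i, s i • v i) (∑ i, t i • v i) ≤ θ := by
  set x := ∑ i, s i • v i with hxdef
  set y := ∑ i, t i • v i with hydef
  have hθπ : θ ≤ π := hθ.trans (by linarith [Real.pi_pos])
  have hcosθ0 : 0 ≤ Real.cos θ :=
    Real.cos_nonneg_of_mem_Icc ⟨by linarith [Real.pi_pos], hθ⟩
  -- cos θ ≤ ⟪v i, v j⟫
  have hcos : ∀ i j, Real.cos θ ≤ ⟪v i, v j⟫ := by
    intro i j
    have h1 : Real.cos θ ≤ Real.cos (InnerProductGeometry.angle (v i) (v j)) :=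
      Real.cos_le_cos_of_nonneg_of_le_pi (InnerProductGeometry.angle_nonneg _ _) hθπ (hang i j)
    have h2 : Real.cos (InnerProductGeometry.angle (v i) (v j)) = ⟪v i, v j⟫ := by
      rw [InnerProductGeometry.cos_angle, hv i, hv j]
      simp
    linarith
  -- norms of x and y
  have hnx : ‖x‖ ≤ ∑ i, s i := by
    calc ‖x‖ ≤ ∑ i, ‖s i • v i‖ := norm_sum_le _ _
      _ = ∑ i, s i := by
        refine Finset.sum_congr rfl fun i _ => ?_
        rw [norm_smul, hv i, Real.norm_eq_abs, abs_of_nonneg (hs i), mul_one]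
  have hny : ‖y‖ ≤ ∑ i, t i := by
    calc ‖y‖ ≤ ∑ i, ‖t i • v i‖ := norm_sum_le _ _
      _ = ∑ i, t i := by
        refine Finset.sum_congr rfl fun i _ => ?_
        rw [norm_smul, hv i, Real.norm_eq_abs, abs_of_nonneg (ht i), mul_one]
  have hnx0 : 0 < ‖x‖ := norm_pos_iff.mpr hx
  have hny0 : 0 < ‖y‖ := norm_pos_iff.mpr hy
  -- inner product expansion
  have hinner : ⟪x, y⟫ = ∑ i, ∑ j, s i * (t j * ⟪v i, v j⟫) := by
    rw [hxdef, hydef, sum_inner]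
    refine Finset.sum_congr rfl fun i _ => ?_
    rw [inner_sum]
    refine Finset.sum_congr rfl fun j _ => ?_
    rw [real_inner_smul_left, real_inner_smul_right]
  have hlow : Real.cos θ * ((∑ i, s i) * (∑ j, t j)) ≤ ⟪x, y⟫ := by
    rw [hinner]
    have : Real.cos θ * ((∑ i, s i) * (∑ j, t j))
        = ∑ i, ∑ j, s i * (t j * Real.cos θ) := by
      rw [Finset.sum_mul_sum]
      rw [Finset.mul_sum]
      refine Finset.sum_congr rfl fun i _ => ?_
      rw [Finset.mul_sum]
      refine Finset.sum_congr rfl fun j _ => ?_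
      ring
    rw [this]
    refine Finset.sum_le_sum fun i _ => Finset.sum_le_sum fun j _ => ?_
    exact mul_le_mul_of_nonneg_left
      (mul_le_mul_of_nonneg_left (hcos i j) (ht j)) (hs i)
  have hkey : Real.cos θ * (‖x‖ * ‖y‖) ≤ ⟪x, y⟫ := by
    refine le_trans ?_ hlow
    have : ‖x‖ * ‖y‖ ≤ (∑ i, s i) * (∑ j, t j) :=
      mul_le_mul hnx hny hny0.le (le_trans hnx0.le hnx)
    exact mul_le_mul_of_nonneg_left this hcosθ0
  have hdiv : Real.cos θ ≤ ⟪x, y⟫ / (‖x‖ * ‖y‖) := by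
    rw [le_div_iff₀ (by positivity)]
    exact hkey
  rw [InnerProductGeometry.angle]
  calc Real.arccos (⟪x, y⟫ / (‖x‖ * ‖y‖)) ≤ Real.arccos (Real.cos θ) := by
        rw [Real.arccos, Real.arccos]
        have := Real.monotone_arcsin hdiv
        linarith
    _ = θ := Real.arccos_cos hθ0 hθπ
end

section
/- For all natural numbers n ≥ 2 and i with 1 ≤ i ≤ n, Σ_{j=i}^{n} 2 · ((i+j+2)!/(j+3)!) · C(n+1, j+1) < (2^n − 1) · ((n+1)!)², where C(a,b) denotes the binomial coefficient and (i+j+2)!/(j+3)! is the descending factorial (i+j+2)(i+j+1)⋯(j+4). -/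
/-!
The `j`-th summand is less than `2 ^ (j - 1) * ((n + 1)!) ^ 2`. Indeed `(i + j + 2)! / (j + 3)!` is a
product of `i - 1 ≤ j - 1` factors, each at most `2 * (j + 1)`, and with `m = j + 1` the classical
bound `m ^ m ≤ (m !) ^ 2` gives `2 * m ^ (m - 2) < (m !) ^ 2`, while
`C(n + 1, m) * m ! ≤ (n + 1)!`. Summing `2 ^ (j - 1)` over `1 ≤ j ≤ n` gives `2 ^ n - 1`.
-/

open Nat

open Finset in
/-- Pairing the factor `k + 1` of `m !` with the factor `m - k`, each product is at least `m`. -/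
theorem Nat.pow_self_le_factorial_sq (m : ℕ) : m ^ m ≤ m ! ^ 2 := by
  have hpair : ∀ k ∈ range m, m ≤ (k + 1) * (m - 1 - k + 1) := by
    intro k hk
    have hkm := mem_range.1 hk
    have : m - 1 - k + 1 = m - k := by omega
    rw [this]
    nlinarith [Nat.sub_add_cancel hkm.le]
  calc m ^ m = m ^ #(range m) := by rw [card_range]
    _ ≤ ∏ k ∈ range m, (k + 1) * (m - 1 - k + 1) := pow_card_le_prod _ _ _ hpair
    _ = m ! ^ 2 := by
      rw [prod_mul_distrib, prod_range_reflect (fun k => k + 1), prod_range_add_one_eq_factorial,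
        sq]

theorem Nat.two_mul_pow_sub_two_lt_factorial_sq {m : ℕ} (hm : 2 ≤ m) :
    2 * m ^ (m - 2) < m ! ^ 2 :=
  calc 2 * m ^ (m - 2) < m ^ 2 * m ^ (m - 2) :=
        Nat.mul_lt_mul_of_pos_right (by nlinarith) (by positivity)
    _ = m ^ m := by rw [← pow_add, Nat.add_sub_cancel' hm]
    _ ≤ m ! ^ 2 := Nat.pow_self_le_factorial_sq m

theorem Nat.choose_mul_factorial_le_factorial (n k : ℕ) : n.choose k * k ! ≤ n ! := by
  rcases le_or_gt k n with hkn | hnk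
  · rw [← Nat.choose_mul_factorial_mul_factorial hkn]
    exact Nat.le_mul_of_pos_right _ (factorial_pos _)
  · simp [Nat.choose_eq_zero_of_lt hnk]

theorem Nat.sum_Icc_one_two_pow_sub_one (n : ℕ) :
    ∑ j ∈ Finset.Icc 1 n, 2 ^ (j - 1) = 2 ^ n - 1 := by
  rw [← Finset.Ico_add_one_right_eq_Icc, Finset.sum_Ico_eq_sum_range]
  simpa using Nat.geomSum_eq le_rfl n

theorem Nat.factorial_div_factorial_le_two_mul_pow {i j : ℕ} (hi : 1 ≤ i) (hij : i ≤ j) :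
    (i + j + 2)! / (j + 3)! ≤ (2 * (j + 1)) ^ (j - 1) := by
  have hdesc : (i + j + 2)! / (j + 3)! = (i + j + 2).descFactorial (i - 1) := by
    rw [Nat.descFactorial_eq_div (by omega), show i + j + 2 - (i - 1) = j + 3 by omega]
  calc (i + j + 2)! / (j + 3)! = (i + j + 2).descFactorial (i - 1) := hdesc
    _ ≤ (i + j + 2) ^ (i - 1) := Nat.descFactorial_le_pow _ _
    _ ≤ (2 * (j + 1)) ^ (i - 1) := Nat.pow_le_pow_left (by omega) _
    _ ≤ (2 * (j + 1)) ^ (j - 1) := Nat.pow_le_pow_right (by omega) (by omega)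

theorem Nat.two_mul_factorial_div_factorial_mul_choose_lt {n i j : ℕ} (hi : 1 ≤ i) (hij : i ≤ j)
    (hjn : j ≤ n) :
    2 * ((i + j + 2)! / (j + 3)!) * (n + 1).choose (j + 1) < 2 ^ (j - 1) * (n + 1)! ^ 2 := by
  have hchoose : 0 < (n + 1).choose (j + 1) := Nat.choose_pos (by omega)
  have hpow : 2 * (j + 1) ^ (j - 1) < (j + 1)! ^ 2 := by
    simpa [show j + 1 - 2 = j - 1 by omega] using
      Nat.two_mul_pow_sub_two_lt_factorial_sq (m := j + 1) (by omega)
  calc 2 * ((i + j + 2)! / (j + 3)!) * (n + 1).choose (j + 1)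
      ≤ 2 * (2 * (j + 1)) ^ (j - 1) * (n + 1).choose (j + 1) := by
        gcongr; exact Nat.factorial_div_factorial_le_two_mul_pow hi hij
    _ = 2 ^ (j - 1) * (2 * (j + 1) ^ (j - 1)) * (n + 1).choose (j + 1) := by
        rw [Nat.mul_pow]; ring
    _ < 2 ^ (j - 1) * (j + 1)! ^ 2 * (n + 1).choose (j + 1) := by gcongr
    _ = 2 ^ (j - 1) * (j + 1)! * ((n + 1).choose (j + 1) * (j + 1)!) := by ring
    _ ≤ 2 ^ (j - 1) * (n + 1)! * (n + 1)! := by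
        gcongr
        exact Nat.choose_mul_factorial_le_factorial _ _
    _ = 2 ^ (j - 1) * (n + 1)! ^ 2 := by ring

theorem sum_descFactorial_choose_lt_general (n i : ℕ) (hi : 1 ≤ i) (hin : i ≤ n) :
    ∑ j ∈ Finset.Icc i n, 2 * ((i + j + 2)! / (j + 3)!) * (n + 1).choose (j + 1)
      < (2 ^ n - 1) * ((n + 1)!) ^ 2 :=
  calc ∑ j ∈ Finset.Icc i n, 2 * ((i + j + 2)! / (j + 3)!) * (n + 1).choose (j + 1)
      < ∑ j ∈ Finset.Icc i n, 2 ^ (j - 1) * (n + 1)! ^ 2 :=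
        Finset.sum_lt_sum_of_nonempty (Finset.nonempty_Icc.2 hin) fun j hj =>
          Nat.two_mul_factorial_div_factorial_mul_choose_lt hi (Finset.mem_Icc.1 hj).1
            (Finset.mem_Icc.1 hj).2
    _ ≤ ∑ j ∈ Finset.Icc 1 n, 2 ^ (j - 1) * (n + 1)! ^ 2 :=
        Finset.sum_le_sum_of_subset (Finset.Icc_subset_Icc_left hi)
    _ = (2 ^ n - 1) * (n + 1)! ^ 2 := by
        rw [← Finset.sum_mul, Nat.sum_Icc_one_two_pow_sub_one]

/-- For all natural numbers `n ≥ 2` and `1 ≤ i ≤ n`,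
`Σ_{j=i}^{n} 2 * ((i+j+2)!/(j+3)!) * C(n+1, j+1) < (2^n − 1) * ((n+1)!)²`,
where `(i+j+2)!/(j+3)!` is the (exact) descending factorial
`(i+j+2)(i+j+1)⋯(j+4)`. -/
theorem sum_descFactorial_choose_lt (n i : ℕ) (hn : 2 ≤ n) (hi : 1 ≤ i) (hin : i ≤ n) :
    ∑ j ∈ Finset.Icc i n, 2 * ((i + j + 2)! / (j + 3)!) * (n + 1).choose (j + 1)
      < (2 ^ n - 1) * ((n + 1)!) ^ 2 :=
  sum_descFactorial_choose_lt_general n i hi hin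
end
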